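/- arXiv:2211.14008 — 4 statements merged into one kernel-verified Lean document; each statement's English description precedes it below -/
import Mathlib

section
/- Let X be an n-dimensional real normed space, Y ⊆ X a linear subspace, x_0 ∈ X \ Y, and suppose {f_1,…,f_l} ⊆ ext B_{X*} is a minimal I-set for Y with respect to x_0 with l ≥ 2. Then the restrictions f_1|_Y, …, f_{l−1}|_Y are linearly independent in Y*. -/
open Metric Module

noncomputable section

variable {X : Type*} [NormedAddCommGroup X] [NormedSpace ℝ X]

/-- The family `f : ι → X*` of extreme points of the dual unit ball is an `I`-set for
`Y` with respect to `x₀`: there exist a best approximation `y₀ ∈ P_Y(x₀)` and positive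
weights `α i` summing to `1` with `f i (x₀ - y₀) = ‖x₀ - y₀‖` for all `i` and
`∑ i, α i * f i y = 0` for all `y ∈ Y`. -/
def IsISet (Y : Submodule ℝ X) (x₀ : X) {ι : Type*} [Fintype ι]
    (f : ι → (X →L[ℝ] ℝ)) : Prop :=
  (∀ i, f i ∈ Set.extremePoints ℝ (closedBall (0 : X →L[ℝ] ℝ) 1)) ∧
  ∃ y₀ ∈ Y, ‖x₀ - y₀‖ = Metric.infDist x₀ (Y : Set X) ∧
    (∀ i, f i (x₀ - y₀) = ‖x₀ - y₀‖) ∧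
    ∃ α : ι → ℝ, (∀ i, 0 < α i) ∧ ∑ i, α i = 1 ∧ ∀ y ∈ Y, ∑ i, α i * f i y = 0

/-- An `I`-set (given by an injective family `f : Fin l → X*`) is minimal if no proper
subfamily is an `I`-set for `Y` with respect to `x₀`. -/
def IsMinimalISet (Y : Submodule ℝ X) (x₀ : X) {l : ℕ} (f : Fin l → (X →L[ℝ] ℝ)) : Prop :=
  IsISet Y x₀ f ∧
    ∀ s : Finset (Fin l), s ≠ Finset.univ → ¬ IsISet Y x₀ (fun i : {i // i ∈ s} => f i)

/-- If `{f₁, …, f_l}` is a minimal `I`-set for `Y` with respect to `x₀ ∉ Y` and `l ≥ 2`,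
then the restrictions `f₁|_Y, …, f_{l-1}|_Y` are linearly independent in `Y*`. -/
theorem minimalISet_restrictions_linearIndependent [FiniteDimensional ℝ X] {n : ℕ}
    (hn : finrank ℝ X = n) (Y : Submodule ℝ X) (x₀ : X) (hx₀ : x₀ ∉ Y)
    {l : ℕ} (hl : 2 ≤ l) (f : Fin l → (X →L[ℝ] ℝ)) (hf : Function.Injective f)
    (hmin : IsMinimalISet Y x₀ f) :
    LinearIndependent ℝ
      (fun i : Fin (l - 1) =>
        ((f (Fin.castLE (Nat.sub_le l 1) i)).toLinearMap.domRestrict Y)) := by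
  obtain ⟨m, rfl⟩ : ∃ m, l = m + 1 := ⟨l - 1, by omega⟩
  obtain ⟨⟨hext, y₀, hy₀Y, hnorm, hfx, α, hαpos, hαsum, hαzero⟩, hminimal⟩ := hmin
  rw [Fintype.linearIndependent_iff]
  intro g hg
  by_contra hne
  push_neg at hne
  obtain ⟨i₀, hi₀⟩ := hne
  -- the restriction relation, pointwise
  have hgy : ∀ y ∈ Y, ∑ i : Fin m, g i * f (Fin.castLE (Nat.sub_le (m+1) 1) i) y = 0 := by
    intro y hy
    have := LinearMap.congr_fun hg ⟨y, hy⟩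
    simpa using this
  -- main argument: any coefficient vector vanishing on Y and on the last index,
  -- with a positive entry, yields a contradiction with minimality
  have key : ∀ c : Fin (m+1) → ℝ, (∀ y ∈ Y, ∑ j, c j * f j y = 0) →
      c (Fin.last m) = 0 → (∃ j, 0 < c j) → False := by
    intro c hc hclast ⟨j₁, hj₁⟩
    set T : Finset (Fin (m+1)) := Finset.univ.filter (fun j => 0 < c j) with hT
    have hTne : T.Nonempty := ⟨j₁, by simp [hT, hj₁]⟩
    obtain ⟨j₀, hj₀T, hj₀min⟩ := T.exists_min_image (fun j => α j / c j) hTne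
    have hcj₀ : 0 < c j₀ := by
      have := Finset.mem_filter.mp hj₀T; exact this.2
    set t := α j₀ / c j₀ with htdef
    have ht : 0 < t := div_pos (hαpos j₀) hcj₀
    set β : Fin (m+1) → ℝ := fun j => α j - t * c j with hβ
    have hβnonneg : ∀ j, 0 ≤ β j := by
      intro j
      by_cases h : 0 < c j
      · have h1 : t ≤ α j / c j := hj₀min j (by simp [hT, h])
        have h2 : t * c j ≤ α j := (le_div_iff₀ h).mp h1
        simp [hβ]; linarith
      · push_neg at h
        have := hαpos j
        simp [hβ]
        nlinarith
    have hβj₀ : β j₀ = 0 := by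
      simp only [hβ, htdef]
      rw [div_mul_cancel₀ _ (ne_of_gt hcj₀)]
      ring
    have hβlast : 0 < β (Fin.last m) := by
      simp [hβ, hclast]; exact hαpos _
    set S : Finset (Fin (m+1)) := Finset.univ.filter (fun j => 0 < β j) with hS
    have hj₀S : j₀ ∉ S := by simp [hS, hβj₀]
    have hSne : S ≠ Finset.univ := by
      intro h
      exact hj₀S (h ▸ Finset.mem_univ j₀)
    have hlastS : Fin.last m ∈ S := by simp [hS, hβlast]
    set B := ∑ j ∈ S, β j with hB
    have hBpos : 0 < B :=
      Finset.sum_pos (fun j hj => (Finset.mem_filter.mp hj).2) ⟨_, hlastS⟩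
    have hBsum : B = ∑ j, β j := by
      refine Finset.sum_subset (Finset.subset_univ S) (fun j _ hj => ?_)
      have h1 := hβnonneg j
      have h2 : ¬ 0 < β j := by simpa [hS] using hj
      linarith
    -- the β-weighted combination vanishes on Y
    have hβzero : ∀ y ∈ Y, ∑ j, β j * f j y = 0 := by
      intro y hy
      have : ∑ j, β j * f j y = (∑ j, α j * f j y) - t * ∑ j, c j * f j y := by
        rw [Finset.mul_sum, ← Finset.sum_sub_distrib]
        refine Finset.sum_congr rfl (fun j _ => ?_)
        simp [hβ]; ring
      rw [this, hαzero y hy, hc y hy]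
      ring
    -- build the I-set on the proper subset S
    refine hminimal S hSne ⟨fun i => hext i, y₀, hy₀Y, hnorm, fun i => hfx i,
      fun i => β i / B, fun i => div_pos ?_ hBpos, ?_, ?_⟩
    · exact (Finset.mem_filter.mp i.2).2
    · rw [← Finset.sum_div, Finset.sum_coe_sort S (fun j => β j)]
      exact div_self (ne_of_gt hBpos)
    · intro y hy
      have h1 : ∑ i : {i // i ∈ S}, β i / B * f i y
          = (∑ j ∈ S, β j * f j y) / B := by
        rw [← Finset.sum_coe_sort S (fun j => β j * f j y), Finset.sum_div]
        exact Finset.sum_congr rfl (fun i _ => by ring)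
      have h2 : ∑ j ∈ S, β j * f j y = ∑ j, β j * f j y := by
        refine Finset.sum_subset (Finset.subset_univ S) (fun j _ hj => ?_)
        have hb1 := hβnonneg j
        have hb2 : ¬ 0 < β j := by simpa [hS] using hj
        have : β j = 0 := le_antisymm (not_lt.mp hb2) hb1
        rw [this, zero_mul]
      rw [h1, h2, hβzero y hy, zero_div]
  -- extend g to Fin (m+1) by zero at the last index
  set c : Fin (m+1) → ℝ := fun j => if h : (j : ℕ) < m then g ⟨j, h⟩ else 0 with hcdef
  have hclast : c (Fin.last m) = 0 := by simp [hcdef]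
  have hcast : ∀ i : Fin m, Fin.castSucc i = Fin.castLE (Nat.sub_le (m+1) 1) i := by
    intro i; ext; rfl
  have hcsum : ∀ y ∈ Y, ∑ j, c j * f j y = 0 := by
    intro y hy
    rw [Fin.sum_univ_castSucc]
    have hterm : ∀ i : Fin m, c (Fin.castSucc i) * f (Fin.castSucc i) y
        = g i * f (Fin.castLE (Nat.sub_le (m+1) 1) i) y := by
      intro i
      rw [hcast i]
      congr 1
      simp [hcdef, Fin.castLE]
    rw [Finset.sum_congr rfl (fun i _ => hterm i), hgy y hy, hclast]
    ring
  have hci₀ : c (Fin.castSucc i₀) = g i₀ := by simp [hcdef]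
  rcases lt_or_gt_of_ne hi₀ with h | h
  · exact key (fun j => - c j) (fun y hy => by
        rw [show ∑ j, -c j * f j y = -(∑ j, c j * f j y) by
          rw [← Finset.sum_neg_distrib]; exact Finset.sum_congr rfl (fun j _ => by ring),
          hcsum y hy]; ring)
      (by show -c (Fin.last m) = 0; rw [hclast]; ring)
      ⟨Fin.castSucc i₀, by show 0 < -c (Fin.castSucc i₀); rw [neg_pos, hci₀]; exact h⟩
  · exact key c hcsum hclast ⟨Fin.castSucc i₀, by rw [hci₀]; exact h⟩
end
end

section
/- Let X be an n-dimensional real normed space and Y ⊆ X a k-dimensional subspace with 1 ≤ k ≤ n−1. If x_0 ∈ X \ Y and there exists a minimal I-set for Y with respect to x_0 of cardinality l, then the affine dimension of the set of best approximations P_Y(x_0) is at most k − l + 1. -/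
open Metric Module

noncomputable section

variable {X : Type*} [NormedAddCommGroup X] [NormedSpace ℝ X]

/-- Affine dimension of a subset of a real module: the dimension of (the direction of)
its affine hull. -/
def adim {M : Type*} [AddCommGroup M] [Module ℝ M] (S : Set M) : ℕ :=
  finrank ℝ (affineSpan ℝ S).direction

/-!
Each `fᵢ` has norm at most `1` and `∑ αᵢ fᵢ` vanishes on `Y`, so for a best approximation `y`
the average `∑ αᵢ fᵢ (x₀ - y)` equals `dist(x₀, Y) = ‖x₀ - y‖`; this forces
`fᵢ (x₀ - y) = dist(x₀, Y)` for every `i`. Hence `P_Y(x₀) - P_Y(x₀) ⊆ Y ∩ ⋂ ker fᵢ`, a space of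
dimension `k - l + dim D`, where `D` is the space of relations `∑ βᵢ fᵢ|_Y = 0`. Minimality makes
`D` the line through `α`: moving from `α` along a relation of coefficient sum zero until a weight
vanishes would give an I-set on fewer functionals.
-/

theorem finrank_iInf_ker_add_card {K V ι : Type*} [Field K] [AddCommGroup V] [Module K V]
    [FiniteDimensional K V] [Fintype ι] (g : ι → Dual K V) :
    finrank K (⨅ i, LinearMap.ker (g i) : Submodule K V) + Fintype.card ι =
      finrank K V + finrank K (LinearMap.ker (Fintype.linearCombination K g)) := by
  have hker : (⨅ i, LinearMap.ker (g i)) = (Submodule.span K (Set.range g)).dualCoannihilator :=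
    SetLike.coe_injective (by ext; simp)
  have hcoann := Subspace.finrank_add_finrank_dualCoannihilator_eq (Submodule.span K (Set.range g))
  have hrank := (Fintype.linearCombination K g).finrank_range_add_finrank_ker
  rw [Fintype.range_linearCombination, Module.finrank_fintype_fun_eq_card] at hrank
  rw [hker]
  omega

theorem eq_of_le_of_le_sum_mul {ι : Type*} [Fintype ι] {w a : ι → ℝ} {c : ℝ}
    (hw : ∀ i, 0 < w i) (hw1 : ∑ i, w i = 1) (ha : ∀ i, a i ≤ c) (hc : c ≤ ∑ i, w i * a i)
    (i : ι) : a i = c := by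
  have hle : ∀ j ∈ Finset.univ, w j * a j ≤ w j * c :=
    fun j _ => mul_le_mul_of_nonneg_left (ha j) (hw j).le
  have hsum : ∑ j, w j * a j = ∑ j, w j * c := by
    refine le_antisymm (Finset.sum_le_sum hle) ?_
    rwa [← Finset.sum_mul, hw1, one_mul]
  exact mul_left_cancel₀ (hw i).ne'
    ((Finset.sum_eq_sum_iff_of_le hle).mp hsum i (Finset.mem_univ i))

theorem exists_add_mul_nonneg_eq_zero {ι : Type*} [Fintype ι] {α β : ι → ℝ}
    (hα : ∀ i, 0 < α i) (hβ : ∃ i, β i < 0) :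
    ∃ t : ℝ, (∀ i, 0 ≤ α i + t * β i) ∧ ∃ j, α j + t * β j = 0 := by
  classical
  obtain ⟨j, hj, hmin⟩ := (Finset.univ.filter fun i => β i < 0).exists_min_image
    (fun i => α i / -β i) (by simpa [Finset.filter_nonempty_iff] using hβ)
  rw [Finset.mem_filter] at hj
  refine ⟨α j / -β j, fun i => ?_, j, by field_simp [hj.2.ne]; ring⟩
  rcases lt_or_ge (β i) 0 with hi | hi
  · have := (le_div_iff₀ (neg_pos.mpr hi)).mp (hmin i (by simp [hi]))
    linarith
  · have := div_nonneg (hα j).le (neg_pos.mpr hj.2).le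
    nlinarith [hα i]

def bestApprox (Y : Submodule ℝ X) (x₀ : X) : Set X :=
  {y | y ∈ Y ∧ ‖x₀ - y‖ = infDist x₀ (Y : Set X)}

section ISet

variable {Y : Submodule ℝ X} {x₀ : X}

theorem IsISet.apply_eq_infDist {ι : Type*} [Fintype ι] {f : ι → X →L[ℝ] ℝ}
    (h : IsISet Y x₀ f) {y : X} (hy : y ∈ bestApprox Y x₀) (i : ι) :
    f i (x₀ - y) = infDist x₀ (Y : Set X) := by
  obtain ⟨hext, y₀, hy₀, hy₀d, hfy₀, α, hαpos, hα1, hαY⟩ := h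
  have hle : ∀ j, f j (x₀ - y) ≤ infDist x₀ (Y : Set X) := fun j => by
    have hnorm : ‖f j‖ ≤ 1 := mem_closedBall_zero_iff.mp (hext j).1
    calc f j (x₀ - y) ≤ ‖f j‖ * ‖x₀ - y‖ := (le_abs_self _).trans ((f j).le_opNorm _)
      _ ≤ 1 * ‖x₀ - y‖ := by gcongr
      _ = infDist x₀ (Y : Set X) := by rw [one_mul, hy.2]
  refine eq_of_le_of_le_sum_mul hαpos hα1 hle (le_of_eq ?_) i
  have hsplit : ∀ j, f j (x₀ - y) = f j (x₀ - y₀) + f j (y₀ - y) := fun j => by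
    rw [← map_add, sub_add_sub_cancel]
  simp only [hsplit, hfy₀, mul_add, Finset.sum_add_distrib, hαY _ (Y.sub_mem hy₀ hy.1),
    ← Finset.sum_mul, hα1, hy₀d]
  ring

theorem IsISet.direction_affineSpan_le {ι : Type*} [Fintype ι] {f : ι → X →L[ℝ] ℝ}
    (h : IsISet Y x₀ f) :
    (affineSpan ℝ (bestApprox Y x₀)).direction ≤
      (⨅ i, LinearMap.ker ((f i : X →ₗ[ℝ] ℝ).domRestrict Y)).map Y.subtype := by
  rw [direction_affineSpan, vectorSpan_def, Submodule.span_le]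
  rintro - ⟨y, hy, y', hy', rfl⟩
  refine ⟨⟨y, hy.1⟩ - ⟨y', hy'.1⟩, ?_, rfl⟩
  simp only [SetLike.mem_coe, Submodule.mem_iInf, LinearMap.mem_ker, LinearMap.domRestrict_apply,
    Submodule.coe_sub]
  intro i
  rw [show y - y' = (x₀ - y') - (x₀ - y) by abel, ContinuousLinearMap.coe_coe, map_sub,
    h.apply_eq_infDist hy, h.apply_eq_infDist hy', sub_self]

theorem mem_ker_linearCombination_domRestrict_iff {ι : Type*} [Fintype ι]
    {f : ι → X →L[ℝ] ℝ} {β : ι → ℝ} :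
    β ∈ LinearMap.ker (Fintype.linearCombination ℝ fun i => (f i : X →ₗ[ℝ] ℝ).domRestrict Y) ↔
      ∀ y ∈ Y, ∑ i, β i * f i y = 0 := by
  simp [LinearMap.ext_iff, Fintype.linearCombination_apply, LinearMap.sum_apply]

theorem IsMinimalISet.pos_of_nonneg {l : ℕ} {f : Fin l → X →L[ℝ] ℝ}
    (hmin : IsMinimalISet Y x₀ f) {γ : Fin l → ℝ} (hγ : ∀ i, 0 ≤ γ i) (hγ1 : ∑ i, γ i = 1)
    (hγY : ∀ y ∈ Y, ∑ i, γ i * f i y = 0) (i : Fin l) : 0 < γ i := by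
  classical
  obtain ⟨⟨hext, y₀, hy₀, hy₀d, hfy₀, -⟩, hminimal⟩ := hmin
  set s := Finset.univ.filter fun j => γ j ≠ 0
  have hs : s = Finset.univ := by
    by_contra hs
    refine hminimal s hs ⟨fun j => hext j, y₀, hy₀, hy₀d, fun j => hfy₀ j, fun j => γ j,
      fun j => (hγ j).lt_of_ne (Finset.mem_filter.mp j.2).2.symm, ?_, fun y hy => ?_⟩
    · rw [Finset.sum_coe_sort s γ, Finset.sum_filter_ne_zero, hγ1]
    · rw [Finset.sum_coe_sort s fun j => γ j * f j y,
        Finset.sum_filter_of_ne fun j _ hj => left_ne_zero_of_mul hj, hγY y hy]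
  exact (hγ i).lt_of_ne (Finset.mem_filter.mp (hs ▸ Finset.mem_univ i)).2.symm

theorem IsMinimalISet.finrank_ker_linearCombination_le_one {l : ℕ} {f : Fin l → X →L[ℝ] ℝ}
    (hmin : IsMinimalISet Y x₀ f) :
    finrank ℝ (LinearMap.ker
      (Fintype.linearCombination ℝ fun i => (f i : X →ₗ[ℝ] ℝ).domRestrict Y)) ≤ 1 := by
  obtain ⟨-, -, -, -, -, α, hαpos, hα1, hαY⟩ := hmin.1
  set K := LinearMap.ker (Fintype.linearCombination ℝ fun i => (f i : X →ₗ[ℝ] ℝ).domRestrict Y)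
  have hαK : α ∈ K := mem_ker_linearCombination_domRestrict_iff.mpr hαY
  suffices hK : K ≤ ℝ ∙ α from
    (Submodule.finrank_mono hK).trans (by simpa using finrank_span_le_card ({α} : Set _))
  intro β hβ
  set β' := β - (∑ i, β i) • α
  have hβ'K : β' ∈ K := K.sub_mem hβ (K.smul_mem _ hαK)
  have hβ'sum : ∑ i, β' i = 0 := by
    simp [β', Finset.sum_sub_distrib, ← Finset.mul_sum, hα1]
  suffices hβ' : β' = 0 from
    Submodule.mem_span_singleton.mpr ⟨∑ i, β i, (sub_eq_zero.mp hβ').symm⟩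
  by_contra hβ'ne
  have hneg : ∃ i, β' i < 0 := by
    by_contra! hnonneg
    exact hβ'ne (funext fun i => (Finset.sum_eq_zero_iff_of_nonneg fun j _ => hnonneg j).mp
      hβ'sum i (Finset.mem_univ i))
  obtain ⟨t, hγ, j, hj⟩ := exists_add_mul_nonneg_eq_zero hαpos hneg
  have hγK : α + t • β' ∈ K := K.add_mem hαK (K.smul_mem t hβ'K)
  have hγ1 : ∑ i, (α i + t * β' i) = 1 := by
    simp [Finset.sum_add_distrib, ← Finset.mul_sum, hβ'sum, hα1]
  have := hmin.pos_of_nonneg hγ hγ1 (mem_ker_linearCombination_domRestrict_iff.mp hγK) j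
  exact this.ne' hj

end ISet

theorem adim_bestApprox_le_general [FiniteDimensional ℝ X] {k : ℕ}
    (Y : Submodule ℝ X) (hk : finrank ℝ Y = k)
    (x₀ : X)
    {l : ℕ} (f : Fin l → (X →L[ℝ] ℝ))
    (hmin : IsMinimalISet Y x₀ f) :
    adim {y : X | y ∈ Y ∧ ‖x₀ - y‖ = Metric.infDist x₀ (Y : Set X)} + l ≤ k + 1 := by
  have hdir := Submodule.finrank_mono hmin.1.direction_affineSpan_le
  rw [Submodule.finrank_map_subtype_eq] at hdir
  have hdim := finrank_iInf_ker_add_card fun i => (f i : X →ₗ[ℝ] ℝ).domRestrict Y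
  rw [Fintype.card_fin, hk] at hdim
  have hker := hmin.finrank_ker_linearCombination_le_one
  change finrank ℝ (affineSpan ℝ (bestApprox Y x₀)).direction + l ≤ k + 1
  omega

/-- If there is a minimal `I`-set of cardinality `l` for the `k`-dimensional subspace
`Y` with respect to `x₀ ∉ Y`, then the affine dimension of the set `P_Y(x₀)` of best
approximations to `x₀` from `Y` is at most `k - l + 1`. -/
theorem adim_bestApprox_le [FiniteDimensional ℝ X] {n k : ℕ} (hn : finrank ℝ X = n)
    (Y : Submodule ℝ X) (hk : finrank ℝ Y = k) (hk1 : 1 ≤ k) (hkn : k ≤ n - 1)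
    (x₀ : X) (hx₀ : x₀ ∉ Y)
    {l : ℕ} (f : Fin l → (X →L[ℝ] ℝ)) (hf : Function.Injective f)
    (hmin : IsMinimalISet Y x₀ f) :
    adim {y : X | y ∈ Y ∧ ‖x₀ - y‖ = Metric.infDist x₀ (Y : Set X)} + l ≤ k + 1 :=
  adim_bestApprox_le_general Y hk x₀ f hmin
end
end

section
/- Let X = ℓ_1^n (ℝ^n with the ℓ_1 norm) and Y = {x ∈ ℝ^n : x_i = 0 for 1 ≤ i ≤ n−k}, a k-dimensional coordinate subspace (1 ≤ k ≤ n−1). Then λ(Y,X) = 1 and the affine dimension of the set of minimal projections from X onto Y equals k(n−k). -/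
open Metric Module

noncomputable section

variable {X : Type*} [NormedAddCommGroup X] [NormedSpace ℝ X]

def IsProjOnto (Y : Submodule ℝ X) (P : X →L[ℝ] X) : Prop :=
  (∀ x, P x ∈ Y) ∧ ∀ y ∈ Y, P y = y

def relProjConst (Y : Submodule ℝ X) : ℝ :=
  sInf {c | ∃ P : X →L[ℝ] X, IsProjOnto Y P ∧ ‖P‖ = c}

def MinProjSet (Y : Submodule ℝ X) : Set (X →L[ℝ] X) :=
  {P | IsProjOnto Y P ∧ ‖P‖ = relProjConst Y}

/-!
A projection onto a nonzero subspace fixes a unit vector, so its norm is at least `1`; on `ℓ₁` the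
norm of an operator is at most the largest norm of the images of the unit vectors `eₗ`. So the
coordinate projection `P₀` and every `P₀ + e_j ⊗ e_i^*` (with `x_i = 0` on `Y` and `e_j ∈ Y`) have
norm `1`, since they send each `eₗ` to `0` or to a unit vector. Conversely the difference of two
projections onto `Y` maps into `Y` and kills `Y`, so it lies in the span of these `k(n-k)` matrix
units. Hence the direction of the affine span of the minimal projections is exactly that span.
-/

open Submodule Finset

namespace IsProjOnto

variable {Y : Submodule ℝ X} {P Q : X →L[ℝ] X}

theorem one_le_norm (hP : IsProjOnto Y P) (hY : Y ≠ ⊥) : 1 ≤ ‖P‖ := by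
  obtain ⟨y, hy, hy0⟩ := exists_mem_ne_zero_of_ne_bot hY
  have : 1 * ‖y‖ ≤ ‖P‖ * ‖y‖ := by simpa [hP.2 y hy] using P.le_opNorm y
  exact le_of_mul_le_mul_right this (norm_pos_iff.2 hy0)

theorem sub_apply_mem (hP : IsProjOnto Y P) (hQ : IsProjOnto Y Q) (x : X) : (P - Q) x ∈ Y :=
  Y.sub_mem (hP.1 x) (hQ.1 x)

theorem sub_apply_of_mem (hP : IsProjOnto Y P) (hQ : IsProjOnto Y Q) {y : X} (hy : y ∈ Y) :
    (P - Q) y = 0 := by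
  simp [hP.2 y hy, hQ.2 y hy]

theorem of_basis {ι : Type*} [Fintype ι] (b : Basis ι ℝ X) {s : Set ι}
    (hY : Y = span ℝ (b '' s)) (hPY : ∀ i, P (b i) ∈ Y) (hPs : ∀ i ∈ s, P (b i) = b i) :
    IsProjOnto Y P := by
  refine ⟨fun x => ?_, fun y hy => ?_⟩
  · rw [← b.sum_repr x, map_sum]
    exact sum_mem fun i _ => by rw [map_smul]; exact Y.smul_mem _ (hPY i)
  · rw [hY] at hy
    refine LinearMap.eqOn_span' (f := P.toLinearMap) (g := LinearMap.id) ?_ hy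
    rintro _ ⟨i, hi, rfl⟩
    exact hPs i hi

end IsProjOnto

theorem relProjConst_eq_one {Y : Submodule ℝ X} (hY : Y ≠ ⊥) {P : X →L[ℝ] X}
    (hP : IsProjOnto Y P) (hP1 : ‖P‖ ≤ 1) : relProjConst Y = 1 := by
  have h1 : (1 : ℝ) ∈ {c | ∃ P : X →L[ℝ] X, IsProjOnto Y P ∧ ‖P‖ = c} :=
    ⟨P, hP, hP1.antisymm (hP.one_le_norm hY)⟩
  have hlb : ∀ c ∈ {c | ∃ P : X →L[ℝ] X, IsProjOnto Y P ∧ ‖P‖ = c}, 1 ≤ c := by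
    rintro c ⟨Q, hQ, rfl⟩
    exact hQ.one_le_norm hY
  exact (csInf_le ⟨1, hlb⟩ h1).antisymm (le_csInf ⟨1, h1⟩ hlb)

theorem mem_minProjSet_of_norm_le_one {Y : Submodule ℝ X} (hY : Y ≠ ⊥) {P : X →L[ℝ] X}
    (hP : IsProjOnto Y P) (hP1 : ‖P‖ ≤ 1) : P ∈ MinProjSet Y :=
  ⟨hP, by rw [relProjConst_eq_one hY hP hP1]; exact hP1.antisymm (hP.one_le_norm hY)⟩

theorem vectorSpan_eq_span_of_add_mem {k V : Type*} [Ring k] [AddCommGroup V] [Module k V]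
    {S G : Set V} (hS : ∀ p ∈ S, ∀ q ∈ S, p - q ∈ span k G) {p : V} (hp : p ∈ S)
    (hG : ∀ g ∈ G, p + g ∈ S) : vectorSpan k S = span k G := by
  refine le_antisymm ?_ (span_le.2 fun g hg => ?_)
  · rw [vectorSpan_def, span_le]
    rintro _ ⟨q, hq, r, hr, rfl⟩
    exact hS q hq r hr
  · simpa using vsub_mem_vectorSpan k (hG g hg) hp

theorem PiLp.opNorm_le_of_norm_basisFun_le {𝕜 ι F : Type*} [NontriviallyNormedField 𝕜] [Fintype ι]
    [SeminormedAddCommGroup F] [NormedSpace 𝕜 F] (T : PiLp 1 (fun _ : ι => 𝕜) →L[𝕜] F) {C : ℝ}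
    (hC : 0 ≤ C) (h : ∀ i, ‖T (PiLp.basisFun 1 𝕜 ι i)‖ ≤ C) : ‖T‖ ≤ C :=
  T.opNorm_le_bound hC fun x => calc
    ‖T x‖ = ‖∑ i, x i • T (PiLp.basisFun 1 𝕜 ι i)‖ := by
      conv_lhs => rw [← (PiLp.basisFun 1 𝕜 ι).sum_repr x]
      simp only [map_sum, map_smul, PiLp.basisFun_repr]
    _ ≤ ∑ i, ‖x i‖ * ‖T (PiLp.basisFun 1 𝕜 ι i)‖ := norm_sum_le_of_le _ fun i _ => norm_smul_le _ _
    _ ≤ ∑ i, ‖x i‖ * C := by gcongr; exact h _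
    _ = C * ‖x‖ := by rw [PiLp.norm_eq_of_L1, ← Finset.sum_mul, mul_comm]

namespace Module.Basis

variable {ι : Type*} [Fintype ι] [DecidableEq ι] [FiniteDimensional ℝ X]

def continuousLinearMap (b : Basis ι ℝ X) : Basis (ι × ι) ℝ (X →L[ℝ] X) :=
  (b.linearMap b).map LinearMap.toContinuousLinearMap

theorem continuousLinearMap_apply_apply (b : Basis ι ℝ X) (ij : ι × ι) (k : ι) :
    b.continuousLinearMap ij (b k) = if ij.2 = k then b ij.1 else 0 := by
  simp [continuousLinearMap, linearMap_apply_apply]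

theorem continuousLinearMap_repr_apply (b : Basis ι ℝ X) (T : X →L[ℝ] X) (ij : ι × ι) :
    b.continuousLinearMap.repr T ij = b.repr (T (b ij.2)) ij.1 := by
  simp [continuousLinearMap, Matrix.stdBasis, LinearMap.toMatrix_apply]

end Module.Basis

theorem Module.Basis.finrank_span_image {R M ι : Type*} [Ring R] [StrongRankCondition R]
    [AddCommGroup M] [Module R M] (b : Basis ι R M) (s : Finset ι) :
    finrank R (span R (b '' s)) = #s := by
  classical
  have := nontrivial_of_invariantBasisNumber R
  rw [finrank_span_set_eq_card (b.linearIndependent.linearIndepOn _).id_image, Set.toFinset_image,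
    Finset.toFinset_coe, card_image_of_injective _ b.injective]

namespace PiLp

variable {ι : Type*} [Fintype ι] [DecidableEq ι] {t : Finset ι}
  {Y : Submodule ℝ (PiLp 1 fun _ : ι => ℝ)}

def coordProj (t : Finset ι) : (PiLp 1 fun _ : ι => ℝ) →L[ℝ] PiLp 1 fun _ : ι => ℝ :=
  ∑ j ∈ tᶜ, (basisFun 1 ℝ ι).continuousLinearMap (j, j)

theorem coordProj_basisFun (l : ι) :
    coordProj t (basisFun 1 ℝ ι l) = if l ∈ t then 0 else basisFun 1 ℝ ι l := by
  simp only [coordProj, _root_.sum_apply, Basis.continuousLinearMap_apply_apply,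
    sum_ite_eq', mem_compl, ite_not]

theorem eq_span_basisFun_of_mem_iff (hY : ∀ x, x ∈ Y ↔ ∀ i ∈ t, x i = 0) :
    Y = span ℝ (basisFun 1 ℝ ι '' ↑tᶜ) := by
  ext x
  rw [hY, Basis.mem_span_image]
  simp [Set.subset_def, not_imp_comm]

theorem basisFun_mem (hY : ∀ x, x ∈ Y ↔ ∀ i ∈ t, x i = 0) {i : ι} (hi : i ∉ t) :
    basisFun 1 ℝ ι i ∈ Y :=
  eq_span_basisFun_of_mem_iff hY ▸ subset_span ⟨i, by simpa using hi, rfl⟩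

theorem isProjOnto_and_norm_le_one_of_apply_basisFun (hY : ∀ x, x ∈ Y ↔ ∀ i ∈ t, x i = 0)
    {T : (PiLp 1 fun _ : ι => ℝ) →L[ℝ] PiLp 1 fun _ : ι => ℝ}
    (hT : ∀ l, T (basisFun 1 ℝ ι l) = 0 ∨ ∃ j ∉ t, T (basisFun 1 ℝ ι l) = basisFun 1 ℝ ι j)
    (hTt : ∀ l ∉ t, T (basisFun 1 ℝ ι l) = basisFun 1 ℝ ι l) :
    IsProjOnto Y T ∧ ‖T‖ ≤ 1 := by
  have hYspan := eq_span_basisFun_of_mem_iff hY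
  refine ⟨IsProjOnto.of_basis _ hYspan (fun l => ?_) (fun l hl => hTt l (by simpa using hl)),
    opNorm_le_of_norm_basisFun_le T zero_le_one fun l => ?_⟩
  · obtain h | ⟨j, hj, h⟩ := hT l
    · exact h ▸ Y.zero_mem
    · exact h ▸ basisFun_mem hY hj
  · obtain h | ⟨j, -, h⟩ := hT l <;> rw [h] <;> simp

theorem isProjOnto_coordProj_and_norm_le_one (hY : ∀ x, x ∈ Y ↔ ∀ i ∈ t, x i = 0) :
    IsProjOnto Y (coordProj t) ∧ ‖coordProj t‖ ≤ 1 := by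
  refine isProjOnto_and_norm_le_one_of_apply_basisFun hY (fun l => ?_) fun l hl => by
    rw [coordProj_basisFun, if_neg hl]
  rw [coordProj_basisFun]
  split_ifs with hl
  exacts [.inl rfl, .inr ⟨l, hl, rfl⟩]

theorem isProjOnto_coordProj_add_and_norm_le_one (hY : ∀ x, x ∈ Y ↔ ∀ i ∈ t, x i = 0)
    {j i : ι} (hj : j ∉ t) (hi : i ∈ t) :
    IsProjOnto Y (coordProj t + (basisFun 1 ℝ ι).continuousLinearMap (j, i)) ∧
      ‖coordProj t + (basisFun 1 ℝ ι).continuousLinearMap (j, i)‖ ≤ 1 := by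
  have happly : ∀ l, (coordProj t + (basisFun 1 ℝ ι).continuousLinearMap (j, i))
      (basisFun 1 ℝ ι l) = if l ∈ t then (if i = l then basisFun 1 ℝ ι j else 0)
        else basisFun 1 ℝ ι l := by
    intro l
    rw [_root_.add_apply, coordProj_basisFun, Basis.continuousLinearMap_apply_apply]
    split_ifs <;> simp_all
  refine isProjOnto_and_norm_le_one_of_apply_basisFun hY (fun l => ?_) fun l hl => by
    rw [happly, if_neg hl]
  rw [happly]
  split_ifs with hl
  exacts [.inr ⟨j, hj, rfl⟩, .inl rfl, .inr ⟨l, hl, rfl⟩]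

theorem sub_mem_span_of_isProjOnto (hY : ∀ x, x ∈ Y ↔ ∀ i ∈ t, x i = 0)
    {P Q : (PiLp 1 fun _ : ι => ℝ) →L[ℝ] PiLp 1 fun _ : ι => ℝ} (hP : IsProjOnto Y P)
    (hQ : IsProjOnto Y Q) :
    P - Q ∈ span ℝ ((basisFun 1 ℝ ι).continuousLinearMap '' ↑(tᶜ ×ˢ t)) := by
  rw [Basis.mem_span_image]
  rintro ⟨j, i⟩ hji
  rw [mem_coe, Finsupp.mem_support_iff, Basis.continuousLinearMap_repr_apply, basisFun_repr] at hji
  simp only [coe_product, coe_compl, Set.mem_prod, Set.mem_compl_iff, mem_coe]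
  refine ⟨fun hj => hji ((hY _).1 (hP.sub_apply_mem hQ _) j hj), by_contra fun hi => hji ?_⟩
  rw [hP.sub_apply_of_mem hQ (basisFun_mem hY hi), zero_apply]

theorem relProjConst_eq_one_and_adim_minProjSet (hY : ∀ x, x ∈ Y ↔ ∀ i ∈ t, x i = 0)
    (ht : tᶜ.Nonempty) : relProjConst Y = 1 ∧ adim (MinProjSet Y) = #tᶜ * #t := by
  have hY0 : Y ≠ ⊥ := by
    obtain ⟨j, hj⟩ := ht
    exact (Submodule.ne_bot_iff Y).2 ⟨_, basisFun_mem hY (mem_compl.1 hj), Basis.ne_zero _ j⟩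
  obtain ⟨hP₀, hP₀1⟩ := isProjOnto_coordProj_and_norm_le_one hY
  refine ⟨relProjConst_eq_one hY0 hP₀ hP₀1, ?_⟩
  have hvec : vectorSpan ℝ (MinProjSet Y) =
      span ℝ ((basisFun 1 ℝ ι).continuousLinearMap '' ↑(tᶜ ×ˢ t)) := by
    refine vectorSpan_eq_span_of_add_mem (fun P hP Q hQ => sub_mem_span_of_isProjOnto hY hP.1 hQ.1)
      (mem_minProjSet_of_norm_le_one hY0 hP₀ hP₀1) ?_
    rintro _ ⟨⟨j, i⟩, hji, rfl⟩
    simp only [coe_product, coe_compl, Set.mem_prod, Set.mem_compl_iff, mem_coe] at hji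
    obtain ⟨hP, hP1⟩ := isProjOnto_coordProj_add_and_norm_le_one hY hji.1 hji.2
    exact mem_minProjSet_of_norm_le_one hY0 hP hP1
  rw [adim, direction_affineSpan, hvec, Basis.finrank_span_image, card_product]

end PiLp

/-- For `X = ℓ₁ⁿ` and the coordinate subspace
`Y = {x : x_i = 0 for the first n - k coordinates}` (with `1 ≤ k ≤ n - 1`), one has
`λ(Y, X) = 1` and the affine dimension of the set of minimal projections is `k(n-k)`. -/
theorem ell1_coordinate_subspace_adim {n k : ℕ} (hk1 : 1 ≤ k) (hkn : k ≤ n - 1)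
    (Y : Submodule ℝ (PiLp 1 fun _ : Fin n => ℝ))
    (hY : ∀ x : PiLp 1 fun _ : Fin n => ℝ,
      x ∈ Y ↔ ∀ i : Fin n, (i : ℕ) < n - k → x i = 0) :
    relProjConst Y = 1 ∧ adim (MinProjSet Y) = k * (n - k) := by
  set t : Finset (Fin n) := {i | (i : ℕ) < n - k}
  have ht : #t = n - k := by simp [t, Fin.card_filter_val_lt]
  have htc : #tᶜ = k := by rw [card_compl, ht, Fintype.card_fin]; omega
  have hYt : ∀ x : PiLp 1 fun _ : Fin n => ℝ, x ∈ Y ↔ ∀ i ∈ t, x i = 0 := by simpa [t] using hY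
  have htne : tᶜ.Nonempty := card_pos.1 (by omega)
  rw [← ht, ← htc]
  exact PiLp.relProjConst_eq_one_and_adim_minProjSet hYt htne
end
end

section
/- Let X be an n-dimensional real normed space and Y ⊆ X a k-dimensional subspace (1 ≤ k ≤ n−1) with λ(Y,X) > 1. Then the affine dimension of the set of minimal projections P_min(X,Y) is at most k(n−k) − 2. -/
/-!
Take `P` in the relative interior of the convex set of minimal projections, and call `(x, f)` a
norming pair of `P` if `‖x‖ ≤ 1`, `‖f‖ ≤ 1` and `f (P x) = ‖P‖`. The functional `T ↦ f (T x)` of a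
norming pair is maximal at `P` on the minimal projections, so it vanishes on the direction of their
affine span, which lies in the `k (n - k)`-dimensional space of differences of projections onto
`Y`. It remains to find two norming pairs whose functionals are independent on that space. If all
were proportional to one of them, the minimality of `P` in two opposite directions would give, by
compactness, proportionality factors of both signs (a Chalmers–Metcalf operator of support two),
and testing the two pairs on a suitable vector of `Y` forces `λ(Y, X) ≤ 1`.
-/

open Metric Module

noncomputable section

variable {X : Type*} [NormedAddCommGroup X] [NormedSpace ℝ X]

lemma Submodule.finrank_inf_ker_lt {K V : Type*} [Field K] [AddCommGroup V] [Module K V]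
    [FiniteDimensional K V] {U : Submodule K V} {L : V →ₗ[K] K} {v : V} (hv : v ∈ U)
    (hLv : L v ≠ 0) : finrank K ↥(U ⊓ LinearMap.ker L) < finrank K U :=
  Submodule.finrank_lt_finrank_of_lt
    (SetLike.lt_iff_le_and_exists.2 ⟨inf_le_left, v, hv, fun h => hLv h.2⟩)

open Filter Topology in
lemma LinearMap.eq_zero_of_isMaxOn_intrinsicInterior {E : Type*} [NormedAddCommGroup E]
    [NormedSpace ℝ E] {s : Set E} {L : E →ₗ[ℝ] ℝ} {P : E} (hP : P ∈ intrinsicInterior ℝ s)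
    (hmax : IsMaxOn L s P) {v : E} (hv : v ∈ (affineSpan ℝ s).direction) : L v = 0 := by
  obtain ⟨q, hq, rfl⟩ := mem_intrinsicInterior.1 hP
  let line : ℝ → affineSpan ℝ s := fun t =>
    ⟨t • v +ᵥ (q : E), AffineSubspace.vadd_mem_of_mem_direction (Submodule.smul_mem _ t hv) q.2⟩
  have hline : Continuous line := by fun_prop
  have hnear : ∀ᶠ t in 𝓝 (0 : ℝ), line t ∈ interior ((↑) ⁻¹' s) :=
    hline.continuousAt.preimage_mem_nhds (by simpa [line] using isOpen_interior.mem_nhds hq)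
  have hloc : IsLocalMax (fun t : ℝ => L q + t * L v) 0 := by
    filter_upwards [hnear] with t ht
    simpa [line, add_comm] using hmax (interior_subset (s := ((↑) : affineSpan ℝ s → E) ⁻¹' s) ht)
  simpa using hloc.hasDerivAt_eq_zero (((hasDerivAt_id 0).mul_const (L v)).const_add (L q))

lemma relProjConst_le_norm {Y : Submodule ℝ X} {P : X →L[ℝ] X} (hP : IsProjOnto Y P) :
    relProjConst Y ≤ ‖P‖ :=
  csInf_le ⟨0, by rintro c ⟨Q, -, rfl⟩; exact norm_nonneg Q⟩ ⟨P, hP, rfl⟩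

lemma exists_isProjOnto [FiniteDimensional ℝ X] (Y : Submodule ℝ X) :
    ∃ P : X →L[ℝ] X, IsProjOnto Y P := by
  obtain ⟨Z, hZ⟩ := Y.exists_isCompl
  exact ⟨LinearMap.toContinuousLinearMap (Y.projection Z hZ), Y.projection_apply_mem hZ,
    fun _ => Y.projection_apply_of_mem_left hZ⟩

lemma isClosed_setOf_isProjOnto [FiniteDimensional ℝ X] (Y : Submodule ℝ X) :
    IsClosed {P : X →L[ℝ] X | IsProjOnto Y P} := by
  simp only [IsProjOnto, Set.ofPred_and, Set.ofPred_forall]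
  refine (isClosed_iInter fun x => ?_).inter (isClosed_iInter fun y => isClosed_iInter fun _ => ?_)
  · exact Y.closed_of_finiteDimensional.preimage (ContinuousLinearMap.apply ℝ X x).continuous
  · exact isClosed_eq (ContinuousLinearMap.apply ℝ X y).continuous continuous_const

lemma minProjSet_nonempty [FiniteDimensional ℝ X] (Y : Submodule ℝ X) :
    (MinProjSet Y).Nonempty := by
  obtain ⟨P₀, hP₀⟩ := exists_isProjOnto Y
  have hK : IsCompact ({P | IsProjOnto Y P} ∩ closedBall 0 ‖P₀‖) :=
    (isCompact_closedBall _ _).of_isClosed_subset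
      ((isClosed_setOf_isProjOnto Y).inter isClosed_closedBall) Set.inter_subset_right
  obtain ⟨P, ⟨hP, hPP₀⟩, hmin⟩ :=
    hK.exists_isMinOn ⟨P₀, hP₀, by simp⟩ continuous_norm.continuousOn
  refine ⟨P, hP, le_antisymm (le_csInf ⟨_, P₀, hP₀, rfl⟩ ?_) (relProjConst_le_norm hP)⟩
  rintro c ⟨Q, hQ, rfl⟩
  rw [mem_closedBall_zero_iff] at hPP₀
  by_cases hQP₀ : ‖Q‖ ≤ ‖P₀‖
  · exact hmin ⟨hQ, mem_closedBall_zero_iff.2 hQP₀⟩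
  · linarith

lemma IsProjOnto.smul_add_smul {Y : Submodule ℝ X} {P Q : X →L[ℝ] X} (hP : IsProjOnto Y P)
    (hQ : IsProjOnto Y Q) {a b : ℝ} (hab : a + b = 1) : IsProjOnto Y (a • P + b • Q) :=
  ⟨fun x => Y.add_mem (Y.smul_mem a (hP.1 x)) (Y.smul_mem b (hQ.1 x)),
    fun y hy => by simp [hP.2 y hy, hQ.2 y hy, ← add_smul, hab]⟩

lemma convex_minProjSet (Y : Submodule ℝ X) : Convex ℝ (MinProjSet Y) := by
  rintro P ⟨hP, hPn⟩ Q ⟨hQ, hQn⟩ a b ha hb hab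
  have hPQ := hP.smul_add_smul hQ hab
  refine ⟨hPQ, le_antisymm ?_ (relProjConst_le_norm hPQ)⟩
  calc ‖a • P + b • Q‖ ≤ a * ‖P‖ + b * ‖Q‖ := by
        simpa [norm_smul, abs_of_nonneg ha, abs_of_nonneg hb] using norm_add_le (a • P) (b • Q)
    _ = relProjConst Y := by rw [hPn, hQn, ← add_mul, hab, one_mul]

def projDiffSpace (Y : Submodule ℝ X) : Submodule ℝ (X →L[ℝ] X) where
  carrier := {T | (∀ x, T x ∈ Y) ∧ ∀ y ∈ Y, T y = 0}
  add_mem' hS hT :=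
    ⟨fun x => Y.add_mem (hS.1 x) (hT.1 x), fun y hy => by simp [hS.2 y hy, hT.2 y hy]⟩
  zero_mem' := ⟨fun _ => Y.zero_mem, fun _ _ => rfl⟩
  smul_mem' c _ hT := ⟨fun x => Y.smul_mem c (hT.1 x), fun y hy => by simp [hT.2 y hy]⟩

lemma IsProjOnto.add {Y : Submodule ℝ X} {P T : X →L[ℝ] X} (hP : IsProjOnto Y P)
    (hT : T ∈ projDiffSpace Y) : IsProjOnto Y (P + T) :=
  ⟨fun x => Y.add_mem (hP.1 x) (hT.1 x), fun y hy => by simp [hP.2 y hy, hT.2 y hy]⟩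

lemma IsProjOnto.sub_mem_projDiffSpace {Y : Submodule ℝ X} {P Q : X →L[ℝ] X}
    (hP : IsProjOnto Y P) (hQ : IsProjOnto Y Q) : P - Q ∈ projDiffSpace Y :=
  ⟨fun x => Y.sub_mem (hP.1 x) (hQ.1 x), fun y hy => by simp [hP.2 y hy, hQ.2 y hy]⟩

lemma smulRight_mem_projDiffSpace {Y : Submodule ℝ X} {ζ : X →L[ℝ] ℝ} (hζ : ∀ y ∈ Y, ζ y = 0)
    {y : X} (hy : y ∈ Y) : ζ.smulRight y ∈ projDiffSpace Y :=
  ⟨fun x => Y.smul_mem (ζ x) hy, fun y' hy' => by simp [hζ y' hy']⟩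

lemma direction_affineSpan_minProjSet_le (Y : Submodule ℝ X) :
    (affineSpan ℝ (MinProjSet Y)).direction ≤ projDiffSpace Y := by
  rw [direction_affineSpan, vectorSpan_def, Submodule.span_le]
  rintro _ ⟨P, hP, Q, hQ, rfl⟩
  exact hP.1.sub_mem_projDiffSpace hQ.1

def liftToProjDiff [FiniteDimensional ℝ X] (Y : Submodule ℝ X) :
    ((X ⧸ Y) →ₗ[ℝ] Y) →ₗ[ℝ] (X →L[ℝ] X) where
  toFun S := LinearMap.toContinuousLinearMap (Y.subtype ∘ₗ S ∘ₗ Y.mkQ)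
  map_add' S T := by ext; simp
  map_smul' c S := by ext; simp

lemma range_liftToProjDiff [FiniteDimensional ℝ X] (Y : Submodule ℝ X) :
    LinearMap.range (liftToProjDiff Y) = projDiffSpace Y := by
  apply le_antisymm
  · rintro _ ⟨S, rfl⟩
    refine ⟨fun x => (S _).2, fun y hy => ?_⟩
    simp [liftToProjDiff, (Submodule.Quotient.mk_eq_zero Y).2 hy]
  · intro T hT
    refine ⟨Y.liftQ (LinearMap.codRestrict Y (T : X →ₗ[ℝ] X) hT.1)
      (fun y hy => Subtype.ext (hT.2 y hy)), ?_⟩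
    ext x
    rfl

lemma injective_liftToProjDiff [FiniteDimensional ℝ X] (Y : Submodule ℝ X) :
    Function.Injective (liftToProjDiff Y) := by
  refine (injective_iff_map_eq_zero _).2 fun S hS => ?_
  refine Submodule.linearMap_qext _ (LinearMap.ext fun x => Subtype.ext ?_)
  simpa [liftToProjDiff] using congrArg (fun T : X →L[ℝ] X => T x) hS

lemma finrank_projDiffSpace [FiniteDimensional ℝ X] (Y : Submodule ℝ X) :
    finrank ℝ (projDiffSpace Y) = finrank ℝ Y * (finrank ℝ X - finrank ℝ Y) := by
  rw [← range_liftToProjDiff, LinearMap.finrank_range_of_inj (injective_liftToProjDiff Y),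
    finrank_linearMap, Nat.mul_comm, Submodule.finrank_quotient]

section NormingPairs

variable {E : Type*} [NormedAddCommGroup E] [NormedSpace ℝ E]

def normingPairs (P : X →L[ℝ] E) : Set (X × (E →L[ℝ] ℝ)) :=
  {p | ‖p.1‖ ≤ 1 ∧ ‖p.2‖ ≤ 1 ∧ p.2 (P p.1) = ‖P‖}

def pairEval (p : X × (E →L[ℝ] ℝ)) : (X →L[ℝ] E) →ₗ[ℝ] ℝ :=
  (p.2.comp (ContinuousLinearMap.apply ℝ E p.1)).toLinearMap

@[simp]
lemma pairEval_apply (p : X × (E →L[ℝ] ℝ)) (T : X →L[ℝ] E) : pairEval p T = p.2 (T p.1) := rfl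

lemma ContinuousLinearMap.apply_apply_le_norm {x : X} {f : E →L[ℝ] ℝ} (hx : ‖x‖ ≤ 1)
    (hf : ‖f‖ ≤ 1) (T : X →L[ℝ] E) : f (T x) ≤ ‖T‖ :=
  calc f (T x) ≤ ‖f‖ * ‖T x‖ := (le_abs_self _).trans (f.le_opNorm _)
    _ ≤ 1 * (‖T‖ * 1) := by gcongr; exact T.le_opNorm_of_le hx
    _ = ‖T‖ := by ring

lemma exists_mem_normingPairs [FiniteDimensional ℝ X] (P : X →L[ℝ] E) :
    (normingPairs P).Nonempty := by
  obtain ⟨x, hx, hPx⟩ := ((isCompact_closedBall (0 : X) 1).image (by fun_prop)).sSup_mem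
    ((nonempty_closedBall.2 zero_le_one).image fun x => ‖P x‖)
  obtain ⟨f, hf, hfx⟩ := exists_dual_vector'' ℝ (P x)
  exact ⟨(x, f), mem_closedBall_zero_iff.1 hx, hf,
    by simp [hfx, hPx, P.sSup_unitClosedBall_eq_norm]⟩

/-- Compactness of the pairs lets a norming pair of `P + t • T`, `t ↓ 0`, converge to one of `P`. -/
lemma exists_mem_normingPairs_pairEval_nonneg [FiniteDimensional ℝ X] [FiniteDimensional ℝ E]
    {P T : X →L[ℝ] E} (h : ∀ t : ℝ, 0 < t → ‖P‖ ≤ ‖P + t • T‖) :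
    ∃ p ∈ normingPairs P, 0 ≤ pairEval p T := by
  set C : Set (ℝ × X × (E →L[ℝ] ℝ)) :=
    (Set.Icc 0 1 ×ˢ closedBall 0 1 ×ˢ closedBall 0 1) ∩
      {w | ‖P‖ ≤ w.2.2 ((P + w.1 • T) w.2.1) ∧ 0 ≤ w.2.2 (T w.2.1)}
  have hC : IsCompact C :=
    (isCompact_Icc.prod ((isCompact_closedBall _ _).prod (isCompact_closedBall _ _))).inter_right
      (Set.ofPred_and ▸ (isClosed_le continuous_const (by fun_prop)).inter
        (isClosed_le continuous_const (by fun_prop)))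
  have hsub : Set.Ioc (0 : ℝ) 1 ⊆ Prod.fst '' C := by
    intro t ht
    obtain ⟨p, hp1, hp2, hp3⟩ := exists_mem_normingPairs (P + t • T)
    have hPp := ContinuousLinearMap.apply_apply_le_norm hp1 hp2 P
    have hPt := h t ht.1
    simp only [add_apply, smul_apply, map_add, map_smul, smul_eq_mul] at hp3
    refine ⟨(t, p), ⟨⟨Set.Ioc_subset_Icc_self ht, mem_closedBall_zero_iff.2 hp1,
      mem_closedBall_zero_iff.2 hp2⟩, ?_, ?_⟩, rfl⟩
    · simpa [hp3] using hPt
    · exact nonneg_of_mul_nonneg_right (by linarith) ht.1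
  have h0 : (0 : ℝ) ∈ Prod.fst '' C :=
    (hC.image continuous_fst).isClosed.closure_subset_iff.2 hsub
      (by simp [closure_Ioc zero_ne_one])
  obtain ⟨⟨_, p⟩, ⟨⟨-, hp1, hp2⟩, hpP, hpT⟩, rfl⟩ := h0
  rw [mem_closedBall_zero_iff] at hp1 hp2
  refine ⟨p, ⟨hp1, hp2, le_antisymm (ContinuousLinearMap.apply_apply_le_norm hp1 hp2 P) ?_⟩, hpT⟩
  simpa using hpP

end NormingPairs

lemma Submodule.exists_continuous_eq_one_of_notMem [FiniteDimensional ℝ X] {Y : Submodule ℝ X}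
    {x : X} (hx : x ∉ Y) : ∃ ζ : X →L[ℝ] ℝ, (∀ y ∈ Y, ζ y = 0) ∧ ζ x = 1 := by
  obtain ⟨f, hfx, hYf⟩ := Y.exists_le_ker_of_notMem hx
  exact ⟨LinearMap.toContinuousLinearMap ((f x)⁻¹ • f),
    fun y hy => by simp [LinearMap.mem_ker.1 (hYf hy)], by simp [hfx]⟩

lemma pairEval_eq_zero_of_mem_direction {Y : Submodule ℝ X} {P : X →L[ℝ] X}
    (hP : P ∈ intrinsicInterior ℝ (MinProjSet Y)) {p : X × (X →L[ℝ] ℝ)} (hp : p ∈ normingPairs P)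
    {V : X →L[ℝ] X} (hV : V ∈ (affineSpan ℝ (MinProjSet Y)).direction) : pairEval p V = 0 := by
  refine (pairEval p).eq_zero_of_isMaxOn_intrinsicInterior hP (fun Q hQ => ?_) hV
  have hPQ : ‖Q‖ = ‖P‖ := hQ.2.trans (intrinsicInterior_subset hP).2.symm
  simpa [hp.2.2, ← hPQ] using ContinuousLinearMap.apply_apply_le_norm hp.1 hp.2.1 Q

namespace IsProjOnto

variable {Y : Submodule ℝ X} {P : X →L[ℝ] X}

lemma fst_notMem_of_mem_normingPairs (hP : IsProjOnto Y P) (h1 : 1 < ‖P‖)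
    {p : X × (X →L[ℝ] ℝ)} (hp : p ∈ normingPairs P) : p.1 ∉ Y := by
  intro hpY
  have hid := ContinuousLinearMap.apply_apply_le_norm hp.1 hp.2.1 (ContinuousLinearMap.id ℝ X)
  have := ContinuousLinearMap.norm_id_le (𝕜 := ℝ) (E := X)
  rw [ContinuousLinearMap.id_apply, ← hP.2 _ hpY, hp.2.2] at hid
  linarith

lemma exists_mem_projDiffSpace_pairEval_eq_one [FiniteDimensional ℝ X] (hP : IsProjOnto Y P)
    (h1 : 1 < ‖P‖) {p : X × (X →L[ℝ] ℝ)} (hp : p ∈ normingPairs P) :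
    ∃ T ∈ projDiffSpace Y, pairEval p T = 1 := by
  obtain ⟨ζ, hζY, hζx⟩ :=
    Y.exists_continuous_eq_one_of_notMem (hP.fst_notMem_of_mem_normingPairs h1 hp)
  refine ⟨ζ.smulRight (‖P‖⁻¹ • P p.1), smulRight_mem_projDiffSpace hζY (Y.smul_mem _ (hP.1 _)), ?_⟩
  simp [hζx, hp.2.2, (zero_lt_one.trans h1).ne']

end IsProjOnto

lemma exists_eq_mul_of_pairEval_eq_mul [FiniteDimensional ℝ X] {Y : Submodule ℝ X}
    {p₀ p : X × (X →L[ℝ] ℝ)} (hx₀ : p₀.1 ∉ Y) {y₀ : X} (hy₀ : y₀ ∈ Y) (hf₀ : p₀.2 y₀ ≠ 0)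
    {s : ℝ} (hs : s ≠ 0) (h : ∀ T ∈ projDiffSpace Y, pairEval p T = s * pairEval p₀ T) :
    ∃ α β : ℝ, α * β = s ∧ p.1 - β • p₀.1 ∈ Y ∧ ∀ y ∈ Y, p.2 y = α * p₀.2 y := by
  obtain ⟨ζ, hζY, hζx₀⟩ := Y.exists_continuous_eq_one_of_notMem hx₀
  have hrel : ∀ y ∈ Y, ζ p.1 * p.2 y = s * p₀.2 y := fun y hy => by
    simpa [hζx₀] using h _ (smulRight_mem_projDiffSpace hζY hy)
  have hβ : ζ p.1 ≠ 0 := fun h0 => by simpa [h0, hs, hf₀] using hrel y₀ hy₀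
  refine ⟨s / ζ p.1, ζ p.1, div_mul_cancel₀ s hβ, ?_, fun y hy => ?_⟩
  · by_contra hx
    obtain ⟨ζ', hζ'Y, hζ'x⟩ := Y.exists_continuous_eq_one_of_notMem hx
    have h' := h _ (smulRight_mem_projDiffSpace hζ'Y hy₀)
    simp only [map_sub, map_smul, smul_eq_mul] at hζ'x
    simp only [pairEval_apply, ContinuousLinearMap.smulRight_apply, map_smul, smul_eq_mul] at h'
    have : s * p₀.2 y₀ = 0 := by
      linear_combination (-(s * p₀.2 y₀)) * hζ'x - ζ' p.1 * hrel y₀ hy₀ + ζ p.1 * h'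
    simp_all
  · rw [div_mul_eq_mul_div, eq_div_iff hβ, ← hrel y hy, mul_comm]

/-- Testing both pairs against `δ • p.1 - β • q.1 ∈ Y`, which `P` fixes, forces
`‖P‖ |α| < |γ|` and `‖P‖ |γ| < |α|`. -/
lemma IsProjOnto.false_of_normingPairs_of_opposite_signs {Y : Submodule ℝ X} {P : X →L[ℝ] X}
    (hP : IsProjOnto Y P) (h1 : 1 < ‖P‖) {p q : X × (X →L[ℝ] ℝ)} (hp : p ∈ normingPairs P)
    (hq : q ∈ normingPairs P) {x₀ : X} {f₀ : X →L[ℝ] ℝ} {α β γ δ : ℝ}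
    (hx : p.1 - β • x₀ ∈ Y) (hu : q.1 - δ • x₀ ∈ Y) (hf : ∀ y ∈ Y, p.2 y = α * f₀ y)
    (hg : ∀ y ∈ Y, q.2 y = γ * f₀ y) (hαβ : 0 < α * β) (hγδ : γ * δ < 0) : False := by
  obtain ⟨hx1, hf1, hfx⟩ := hp
  obtain ⟨hu1, hg1, hgu⟩ := hq
  set w := δ • p.1 - β • q.1 with hw
  have hwY : w ∈ Y := by
    have : w = δ • (p.1 - β • x₀) - β • (q.1 - δ • x₀) := by module
    exact this ▸ Y.sub_mem (Y.smul_mem _ hx) (Y.smul_mem _ hu)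
  have hfq : γ * p.2 (P q.1) = α * ‖P‖ := by
    rw [hf _ (hP.1 _), ← hgu, hg _ (hP.1 _)]; ring
  have hgp : α * q.2 (P p.1) = γ * ‖P‖ := by
    rw [hg _ (hP.1 _), ← hfx, hf _ (hP.1 _)]; ring
  have hPw : P w = δ • P p.1 - β • P q.1 := by simp [hw]
  have hfw : γ * p.2 w = ‖P‖ * (γ * δ - α * β) := by
    rw [← hP.2 w hwY, hPw, map_sub, map_smul, map_smul, smul_eq_mul, smul_eq_mul, hfx]
    linear_combination (-β) * hfq
  have hgw : α * q.2 w = ‖P‖ * (γ * δ - α * β) := by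
    rw [← hP.2 w hwY, hPw, map_sub, map_smul, map_smul, smul_eq_mul, smul_eq_mul, hgu]
    linear_combination δ * hgp
  have hnw : ‖w‖ ≤ |δ| + |β| := by
    refine (norm_sub_le _ _).trans ?_
    rw [norm_smul, norm_smul, Real.norm_eq_abs, Real.norm_eq_abs]
    gcongr <;> nlinarith [abs_nonneg δ, abs_nonneg β]
  have hD : |γ * δ - α * β| = |γ| * |δ| + |α| * |β| := by
    rw [abs_of_neg (by linarith), ← abs_mul, ← abs_mul, abs_of_neg hγδ, abs_of_pos hαβ]
    ring
  have e1 : ‖P‖ * (|γ| * |δ| + |α| * |β|) ≤ |γ| * (|δ| + |β|) :=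
    calc ‖P‖ * (|γ| * |δ| + |α| * |β|) = |γ| * |p.2 w| := by
          rw [← hD, ← abs_mul, hfw, abs_mul, abs_norm]
      _ ≤ |γ| * (|δ| + |β|) := by
          gcongr; simpa using (p.2.le_of_opNorm_le hf1 w).trans (by simpa using hnw)
  have e2 : ‖P‖ * (|γ| * |δ| + |α| * |β|) ≤ |α| * (|δ| + |β|) :=
    calc ‖P‖ * (|γ| * |δ| + |α| * |β|) = |α| * |q.2 w| := by
          rw [← hD, ← abs_mul, hgw, abs_mul, abs_norm]
      _ ≤ |α| * (|δ| + |β|) := by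
          gcongr; simpa using (q.2.le_of_opNorm_le hg1 w).trans (by simpa using hnw)
  have ha : 0 < |α| := abs_pos.2 (left_ne_zero_of_mul hαβ.ne')
  have hb : 0 < |β| := abs_pos.2 (right_ne_zero_of_mul hαβ.ne')
  have hc : 0 < |γ| := abs_pos.2 (left_ne_zero_of_mul hγδ.ne)
  have hd : 0 < |δ| := abs_pos.2 (right_ne_zero_of_mul hγδ.ne)
  have hαγ : ‖P‖ * |α| < |γ| := lt_of_mul_lt_mul_right
    (by nlinarith [mul_pos (mul_pos hc hd) (sub_pos.2 h1)] : ‖P‖ * |α| * |β| < |γ| * |β|) hb.le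
  have hγα : ‖P‖ * |γ| < |α| := lt_of_mul_lt_mul_right
    (by nlinarith [mul_pos (mul_pos ha hb) (sub_pos.2 h1)] : ‖P‖ * |γ| * |δ| < |α| * |δ|) hd.le
  nlinarith

/-- If every norming functional were a multiple of that of `p₀` on `projDiffSpace Y`, the
minimality of `P` in the directions `± T₀` would produce multiples of both signs. -/
lemma exists_mem_normingPairs_pairEval_ne_zero [FiniteDimensional ℝ X] {Y : Submodule ℝ X}
    {P : X →L[ℝ] X} (hP : P ∈ MinProjSet Y) (h1 : 1 < ‖P‖) {p₀ : X × (X →L[ℝ] ℝ)}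
    (hp₀ : p₀ ∈ normingPairs P) :
    ∃ p ∈ normingPairs P, ∃ T ∈ projDiffSpace Y ⊓ LinearMap.ker (pairEval p₀),
      pairEval p T ≠ 0 := by
  by_contra! hprop
  obtain ⟨T₀, hT₀, hT₀p₀⟩ := hP.1.exists_mem_projDiffSpace_pairEval_eq_one h1 hp₀
  have hmul : ∀ p ∈ normingPairs P, ∀ T ∈ projDiffSpace Y,
      pairEval p T = pairEval p T₀ * pairEval p₀ T := by
    intro p hp T hT
    have := hprop p hp (T - pairEval p₀ T • T₀)
      ⟨sub_mem hT (Submodule.smul_mem _ _ hT₀), by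
        show pairEval p₀ _ = 0
        rw [map_sub, map_smul, hT₀p₀, smul_eq_mul, mul_one, sub_self]⟩
    rw [map_sub, map_smul, smul_eq_mul, sub_eq_zero] at this
    rw [this, mul_comm]
  have hne : ∀ p ∈ normingPairs P, pairEval p T₀ ≠ 0 := by
    intro p hp h0
    obtain ⟨T, hT, hTp⟩ := hP.1.exists_mem_projDiffSpace_pairEval_eq_one h1 hp
    simp [hmul p hp T hT, h0] at hTp
  have hmin : ∀ T ∈ projDiffSpace Y, ∀ t : ℝ, 0 < t → ‖P‖ ≤ ‖P + t • T‖ := fun T hT t _ =>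
    hP.2 ▸ relProjConst_le_norm (hP.1.add (Submodule.smul_mem _ t hT))
  obtain ⟨p, hp, hpos⟩ := exists_mem_normingPairs_pairEval_nonneg (hmin T₀ hT₀)
  obtain ⟨q, hq, hneg⟩ := exists_mem_normingPairs_pairEval_nonneg (hmin (-T₀) (neg_mem hT₀))
  rw [map_neg, neg_nonneg] at hneg
  have hx₀ := hP.1.fst_notMem_of_mem_normingPairs h1 hp₀
  have hf₀ : p₀.2 (P p₀.1) ≠ 0 := by rw [hp₀.2.2]; positivity
  obtain ⟨α, β, hαβ, hx, hf⟩ :=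
    exists_eq_mul_of_pairEval_eq_mul hx₀ (hP.1.1 _) hf₀ (hne p hp) (hmul p hp)
  obtain ⟨γ, δ, hγδ, hu, hg⟩ :=
    exists_eq_mul_of_pairEval_eq_mul hx₀ (hP.1.1 _) hf₀ (hne q hq) (hmul q hq)
  exact hP.1.false_of_normingPairs_of_opposite_signs h1 hp hq hx hu hf hg
    (hαβ ▸ lt_of_le_of_ne hpos (hne p hp).symm) (hγδ ▸ lt_of_le_of_ne hneg (hne q hq))

theorem adim_minProjSet_le_of_projConst_gt_one_general [FiniteDimensional ℝ X] {n k : ℕ}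
    (hn : finrank ℝ X = n) (Y : Submodule ℝ X) (hk : finrank ℝ Y = k)
    (hlam : 1 < relProjConst Y) :
    adim (MinProjSet Y) + 2 ≤ k * (n - k) := by
  obtain ⟨P, hPint⟩ := Set.Nonempty.intrinsicInterior (convex_minProjSet Y) (minProjSet_nonempty Y)
  have hP : P ∈ MinProjSet Y := intrinsicInterior_subset hPint
  have h1 : 1 < ‖P‖ := hP.2 ▸ hlam
  obtain ⟨p₀, hp₀⟩ := exists_mem_normingPairs P
  obtain ⟨T₀, hT₀, hT₀p₀⟩ := hP.1.exists_mem_projDiffSpace_pairEval_eq_one h1 hp₀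
  obtain ⟨p, hp, T, hT, hTp⟩ := exists_mem_normingPairs_pairEval_ne_zero hP h1 hp₀
  have hV : (affineSpan ℝ (MinProjSet Y)).direction ≤
      projDiffSpace Y ⊓ LinearMap.ker (pairEval p₀) ⊓ LinearMap.ker (pairEval p) :=
    fun _ hV => ⟨⟨direction_affineSpan_minProjSet_le Y hV,
      pairEval_eq_zero_of_mem_direction hPint hp₀ hV⟩,
      pairEval_eq_zero_of_mem_direction hPint hp hV⟩
  have hdrop₀ := Submodule.finrank_inf_ker_lt hT₀ (hT₀p₀ ▸ one_ne_zero)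
  have hdrop := Submodule.finrank_inf_ker_lt hT hTp
  rw [finrank_projDiffSpace, hk, hn] at hdrop₀
  have := Submodule.finrank_mono hV
  unfold adim
  omega

/-- If `X` is `n`-dimensional, `Y ⊆ X` is `k`-dimensional with `1 ≤ k ≤ n - 1`, and
`λ(Y, X) > 1`, then the affine dimension of the set of minimal projections is at most
`k(n-k) - 2`. -/
theorem adim_minProjSet_le_of_projConst_gt_one [FiniteDimensional ℝ X] {n k : ℕ}
    (hn : finrank ℝ X = n) (Y : Submodule ℝ X) (hk : finrank ℝ Y = k)
    (hk1 : 1 ≤ k) (hkn : k ≤ n - 1) (hlam : 1 < relProjConst Y) :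
    adim (MinProjSet Y) + 2 ≤ k * (n - k) :=
  adim_minProjSet_le_of_projConst_gt_one_general hn Y hk hlam
end
end
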